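/- arXiv:1804.00654 — 10 statements merged into one kernel-verified Lean document; each statement's English description precedes it below -/
import Mathlib

section
/- For all nonnegative integers n, real q ≠ 0, and real r, the Cauchy polynomial with q parameter of the first kind satisfies c_n^q(r) = ∑_{k=0}^n w_{q,r}(n,k) · 1/(k+1). -/
open Finset

/-- `c_n^q(r) = ∑_{k=0}^n w_{q,r}(n,k) / (k+1)`. -/
theorem stmt_1 (n : ℕ) (q r : ℝ) (hq : q ≠ 0) (w : ℕ → ℕ → ℝ)
    (hw : ∀ x : ℝ, ∏ j ∈ range n, (x - r - j * q) = ∑ k ∈ range (n + 1), w n k * x ^ k) :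
    (∫ x in (0:ℝ)..1, ∏ j ∈ range n, (x - r - j * q)) =
      ∑ k ∈ range (n + 1), w n k * (1 / (k + 1)) := by
  simp only [hw]
  rw [intervalIntegral.integral_finset_sum]
  · refine Finset.sum_congr rfl fun k _ => ?_
    rw [intervalIntegral.integral_const_mul, integral_pow]
    norm_num
  · intro k _
    exact (intervalIntegral.intervalIntegrable_pow k).const_mul _
end

section
/- For all nonnegative integers n, real q ≠ 0, and real r, the Cauchy polynomial with q parameter of the second kind satisfies ĉ_n^q(-r) = ∑_{k=0}^n (-1)^k w_{q,r}(n,k) · 1/(k+1). -/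
open Finset

/-- `ĉ_n^q(-r) = ∑_{k=0}^n (-1)^k w_{q,r}(n,k) / (k+1)`. -/
theorem stmt_2 (n : ℕ) (q r : ℝ) (hq : q ≠ 0) (w : ℕ → ℕ → ℝ)
    (hw : ∀ x : ℝ, ∏ j ∈ range n, (x - r - j * q) = ∑ k ∈ range (n + 1), w n k * x ^ k) :
    (∫ x in (0:ℝ)..1, ∏ j ∈ range n, (-x + (-r) - j * q)) =
      ∑ k ∈ range (n + 1), (-1) ^ k * w n k * (1 / (k + 1)) := by
  have h : ∀ x : ℝ, (∏ j ∈ range n, (-x + (-r) - j * q)) =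
      ∑ k ∈ range (n + 1), (-1) ^ k * w n k * x ^ k := by
    intro x
    have h1 := hw (-x)
    have h2 : (∏ j ∈ range n, (-x + (-r) - j * q)) = ∏ j ∈ range n, (-x - r - j * q) := by
      apply Finset.prod_congr rfl; intro j _; ring
    rw [h2, h1]
    apply Finset.sum_congr rfl; intro k _
    rw [neg_pow]; ring
  rw [intervalIntegral.integral_congr (fun x _ => h x),
    intervalIntegral.integral_finset_sum]
  · refine Finset.sum_congr rfl fun k _ => ?_
    rw [intervalIntegral.integral_const_mul, integral_pow]
    simp
  · intro k _
    exact (Continuous.intervalIntegrable (by continuity) _ _)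
end

section
/- For all nonnegative integers n, real q ≠ 0, and real r: ∑_{k=0}^n W_{q,r}(n,k) c_k^q(r) = 1/(n+1), where W_{q,r}(n,k) are the r-Whitney numbers of the second kind and c_k^q(r) the Cauchy polynomials with q parameter of the first kind. -/
open Finset

/-- `∑_{k=0}^n W_{q,r}(n,k) c_k^q(r) = 1/(n+1)`. -/
theorem stmt_3 (n : ℕ) (q r : ℝ) (hq : q ≠ 0) (W : ℕ → ℕ → ℝ)
    (hW : ∀ m : ℕ, ∀ x : ℝ,
      x ^ m = ∑ k ∈ range (m + 1), W m k * ∏ j ∈ range k, (x - r - j * q)) :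
    ∑ k ∈ range (n + 1),
        W n k * ∫ x in (0:ℝ)..1, ∏ j ∈ range k, (x - r - j * q) = 1 / (n + 1) := by
  have hcont : ∀ k : ℕ, Continuous (fun x : ℝ => ∏ j ∈ range k, (x - r - j * q)) := by
    intro k
    exact continuous_finset_prod _ (fun j _ => by continuity)
  have h1 : ∑ k ∈ range (n + 1),
      W n k * ∫ x in (0:ℝ)..1, ∏ j ∈ range k, (x - r - j * q)
      = ∫ x in (0:ℝ)..1, ∑ k ∈ range (n + 1), W n k * ∏ j ∈ range k, (x - r - j * q) := by
    rw [intervalIntegral.integral_finset_sum]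
    · exact Finset.sum_congr rfl fun k _ => (intervalIntegral.integral_const_mul _ _).symm
    · intro k _
      exact ((continuous_const.mul (hcont k)).intervalIntegrable _ _)
  rw [h1]
  have h2 : (∫ x in (0:ℝ)..1, ∑ k ∈ range (n + 1),
      W n k * ∏ j ∈ range k, (x - r - j * q)) = ∫ x in (0:ℝ)..1, x ^ n := by
    congr 1
    ext x
    exact (hW n x).symm
  rw [h2, integral_pow]
  norm_num
end

section
/- For all nonnegative integers n, real q ≠ 0, and real r: ∑_{k=0}^n W_{q,r}(n,k) ĉ_k^q(-r) = (-1)^n/(n+1), where W_{q,r}(n,k) are the r-Whitney numbers of the second kind and ĉ_k^q the Cauchy polynomials with q parameter of the second kind. -/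
open Finset

/-- `∑_{k=0}^n W_{q,r}(n,k) ĉ_k^q(-r) = (-1)^n/(n+1)`. -/
theorem stmt_4 (n : ℕ) (q r : ℝ) (hq : q ≠ 0) (W : ℕ → ℕ → ℝ)
    (hW : ∀ m : ℕ, ∀ x : ℝ,
      x ^ m = ∑ k ∈ range (m + 1), W m k * ∏ j ∈ range k, (x - r - j * q)) :
    ∑ k ∈ range (n + 1),
        W n k * ∫ x in (0:ℝ)..1, ∏ j ∈ range k, (-x + (-r) - j * q) =
      (-1) ^ n / (n + 1) := by
  have hcont : ∀ k : ℕ, Continuous fun x : ℝ =>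
      W n k * ∏ j ∈ range k, (-x + (-r) - j * q) := by
    intro k
    exact continuous_const.mul (continuous_finset_prod _ fun j _ => by continuity)
  calc ∑ k ∈ range (n + 1),
        W n k * ∫ x in (0:ℝ)..1, ∏ j ∈ range k, (-x + (-r) - j * q)
      = ∑ k ∈ range (n + 1),
        ∫ x in (0:ℝ)..1, W n k * ∏ j ∈ range k, (-x + (-r) - j * q) := by
        simp [intervalIntegral.integral_const_mul]
    _ = ∫ x in (0:ℝ)..1, ∑ k ∈ range (n + 1),
        W n k * ∏ j ∈ range k, (-x + (-r) - j * q) := by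
        rw [intervalIntegral.integral_finset_sum]
        intro k _
        exact (hcont k).intervalIntegrable _ _
    _ = ∫ x in (0:ℝ)..1, (-x) ^ n := by
        apply intervalIntegral.integral_congr
        intro x _
        have := hW n (-x)
        simp only [show ∀ j : ℕ, (-x) - r - j * q = -x + (-r) - j * q from
          fun j => by ring] at this
        exact this.symm
    _ = (-1) ^ n / (n + 1) := by
        rw [intervalIntegral.integral_congr (g := fun x => (-1:ℝ) ^ n * x ^ n)
          (fun x _ => by rw [neg_pow]),
          intervalIntegral.integral_const_mul, integral_pow]
        field_simp
        simp
end

section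
/- For all nonnegative integers n and real numbers q ≠ 0, r, s: c_n^q(r+s) = ∑_{j=0}^n (-1)^{n-j} C(n,j) [r|q]_{n-j} c_j^q(s), where [r|q]_m = ∏_{i=0}^{m-1}(r + iq) is the generalized rising factorial. -/
open Finset

private lemma vand (q a b : ℝ) : ∀ n : ℕ,
    ∏ j ∈ range n, (a + b - j * q) =
      ∑ j ∈ range (n + 1), (n.choose j : ℝ) *
        (∏ i ∈ range j, (a - i * q)) * (∏ i ∈ range (n - j), (b - i * q)) := by
  intro n
  induction n with
  | zero => simp
  | succ n ih =>
    rw [prod_range_succ, ih, Finset.sum_mul]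
    have step : ∀ j ∈ range (n + 1),
        (n.choose j : ℝ) * (∏ i ∈ range j, (a - i * q)) *
          (∏ i ∈ range (n - j), (b - i * q)) * (a + b - n * q) =
        (n.choose j : ℝ) * (∏ i ∈ range (j + 1), (a - i * q)) *
          (∏ i ∈ range (n - j), (b - i * q)) +
        (n.choose j : ℝ) * (∏ i ∈ range j, (a - i * q)) *
          (∏ i ∈ range (n - j + 1), (b - i * q)) := by
      intro j hj
      rw [mem_range] at hj
      have hjn : j ≤ n := Nat.lt_succ_iff.mp hj
      have : a + b - n * q = (a - j * q) + (b - (n - j : ℕ) * q) := by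
        have : ((n - j : ℕ) : ℝ) = (n : ℝ) - j := by
          push_cast [Nat.cast_sub hjn]; ring
        rw [this]; ring
      rw [this, prod_range_succ, prod_range_succ]; ring
    rw [Finset.sum_congr rfl step, Finset.sum_add_distrib]
    have hS1 : ∑ j ∈ range (n + 1), (n.choose j : ℝ) *
          (∏ i ∈ range (j + 1), (a - i * q)) * (∏ i ∈ range (n - j), (b - i * q)) =
        (∑ j ∈ range n, (n.choose j : ℝ) *
          (∏ i ∈ range (j + 1), (a - i * q)) * (∏ i ∈ range (n - j), (b - i * q)))
          + ∏ i ∈ range (n + 1), (a - i * q) := by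
      rw [Finset.sum_range_succ]; simp
    have hS2 : ∑ j ∈ range (n + 1), (n.choose j : ℝ) *
          (∏ i ∈ range j, (a - i * q)) * (∏ i ∈ range (n - j + 1), (b - i * q)) =
        (∑ j ∈ range n, (n.choose (j + 1) : ℝ) *
          (∏ i ∈ range (j + 1), (a - i * q)) * (∏ i ∈ range (n - j), (b - i * q)))
          + ∏ i ∈ range (n + 1), (b - i * q) := by
      rw [Finset.sum_range_succ' (fun j => (n.choose j : ℝ) *
          (∏ i ∈ range j, (a - i * q)) * (∏ i ∈ range (n - j + 1), (b - i * q))) n]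
      simp only [Nat.choose_zero_right, Nat.cast_one, one_mul, prod_range_zero,
        Nat.sub_zero]
      congr 1
      apply Finset.sum_congr rfl
      intro j hj
      rw [mem_range] at hj
      have : n - (j + 1) + 1 = n - j := by omega
      rw [this]
    have hT : ∑ j ∈ range (n + 2), ((n + 1).choose j : ℝ) *
          (∏ i ∈ range j, (a - i * q)) * (∏ i ∈ range (n + 1 - j), (b - i * q)) =
        (∑ j ∈ range (n + 1), ((n + 1).choose (j + 1) : ℝ) *
          (∏ i ∈ range (j + 1), (a - i * q)) * (∏ i ∈ range (n - j), (b - i * q)))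
          + ∏ i ∈ range (n + 1), (b - i * q) := by
      rw [Finset.sum_range_succ' (fun j => ((n + 1).choose j : ℝ) *
          (∏ i ∈ range j, (a - i * q)) * (∏ i ∈ range (n + 1 - j), (b - i * q))) (n + 1)]
      simp only [Nat.choose_zero_right, Nat.cast_one, one_mul, prod_range_zero,
        Nat.sub_zero, Nat.succ_sub_succ_eq_sub]
    rw [hS1, hS2]
    show _ = ∑ j ∈ range (n + 2), ((n + 1).choose j : ℝ) *
          (∏ i ∈ range j, (a - i * q)) * (∏ i ∈ range (n + 1 - j), (b - i * q))
    rw [hT, Finset.sum_range_succ (fun j => ((n + 1).choose (j + 1) : ℝ) *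
          (∏ i ∈ range (j + 1), (a - i * q)) * (∏ i ∈ range (n - j), (b - i * q))) n]
    simp only [Nat.choose_self, Nat.cast_one, one_mul, Nat.sub_self, prod_range_zero,
      mul_one]
    have hP : ∀ j ∈ range n, ((n + 1).choose (j + 1) : ℝ) *
          (∏ i ∈ range (j + 1), (a - i * q)) * (∏ i ∈ range (n - j), (b - i * q)) =
        (n.choose j : ℝ) * (∏ i ∈ range (j + 1), (a - i * q)) *
          (∏ i ∈ range (n - j), (b - i * q)) +
        (n.choose (j + 1) : ℝ) * (∏ i ∈ range (j + 1), (a - i * q)) *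
          (∏ i ∈ range (n - j), (b - i * q)) := by
      intro j hj
      rw [Nat.choose_succ_succ n j]
      push_cast
      ring
    rw [Finset.sum_congr rfl hP, Finset.sum_add_distrib]
    ring

/-- `c_n^q(r+s) = ∑_{j=0}^n (-1)^{n-j} C(n,j) [r|q]_{n-j} c_j^q(s)`. -/
theorem stmt_5 (n : ℕ) (q r s : ℝ) (hq : q ≠ 0) :
    (∫ x in (0:ℝ)..1, ∏ j ∈ range n, (x - (r + s) - j * q)) =
      ∑ j ∈ range (n + 1), (-1) ^ (n - j) * (n.choose j : ℝ) *
        (∏ i ∈ range (n - j), (r + i * q)) *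
        ∫ x in (0:ℝ)..1, ∏ i ∈ range j, (x - s - i * q) := by
  have key : ∀ x : ℝ, ∏ j ∈ range n, (x - (r + s) - j * q) =
      ∑ j ∈ range (n + 1), ((-1) ^ (n - j) * (n.choose j : ℝ) *
        (∏ i ∈ range (n - j), (r + i * q)) * ∏ i ∈ range j, (x - s - i * q)) := by
    intro x
    have hv := vand q (x - s) (-r) n
    have hlhs : ∏ j ∈ range n, (x - (r + s) - j * q) =
        ∏ j ∈ range n, ((x - s) + (-r) - j * q) := by
      apply Finset.prod_congr rfl; intro j _; ring
    rw [hlhs, hv]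
    apply Finset.sum_congr rfl
    intro j hj
    have h1 : ∏ i ∈ range (n - j), (-r - i * q) =
        ∏ i ∈ range (n - j), ((-1) * (r + i * q)) := by
      apply Finset.prod_congr rfl; intro i _; ring
    rw [h1, Finset.prod_mul_distrib, Finset.prod_const, Finset.card_range]
    ring
  simp_rw [key]
  rw [intervalIntegral.integral_finset_sum]
  · apply Finset.sum_congr rfl
    intro j hj
    rw [intervalIntegral.integral_const_mul]
  · intro j hj
    apply Continuous.intervalIntegrable
    continuity
end

section
/- For all nonnegative integers n and real numbers q ≠ 0, r: c_n^q(r) = ∑_{j=0}^n (-1)^{n-j} C(n,j) [r|q]_{n-j} c_j^q, where c_j^q = c_j^q(0) is the Cauchy number with q parameter of the first kind. -/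
open Finset

lemma key (q r : ℝ) (n : ℕ) (x : ℝ) :
    ∏ j ∈ range n, (x - r - j * q) =
      ∑ j ∈ range (n + 1), (-1:ℝ) ^ (n - j) * (n.choose j : ℝ) *
        (∏ i ∈ range (n - j), (r + i * q)) * ∏ i ∈ range j, (x - i * q) := by
  induction n with
  | zero => simp
  | succ n ih =>
    rw [prod_range_succ, ih, sum_mul]
    have h1 : ∀ j ∈ range (n + 1),
        (-1:ℝ) ^ (n - j) * (n.choose j : ℝ) *
          (∏ i ∈ range (n - j), (r + i * q)) * (∏ i ∈ range j, (x - i * q)) *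
          (x - r - n * q) =
        (-1:ℝ) ^ (n - j) * (n.choose j : ℝ) *
          (∏ i ∈ range (n - j), (r + i * q)) * (∏ i ∈ range (j+1), (x - i * q))
        - (-1:ℝ) ^ (n - j) * (n.choose j : ℝ) *
          (∏ i ∈ range (n - j + 1), (r + i * q)) * (∏ i ∈ range j, (x - i * q)) := by
      intro j hj
      rw [mem_range] at hj
      have hj' : j ≤ n := Nat.lt_succ_iff.mp hj
      have hc : ((n - j : ℕ) : ℝ) = (n : ℝ) - j := by
        rw [Nat.cast_sub hj']
      rw [prod_range_succ, prod_range_succ, hc]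
      ring
    rw [sum_congr rfl h1, sum_sub_distrib]
    -- RHS: split off j = 0
    conv_rhs => rw [sum_range_succ']
    -- rewrite each f (j+1) as A j * P (j+1) + c j
    have h2 : ∀ j ∈ range (n + 1),
        (-1:ℝ) ^ (n + 1 - (j+1)) * ((n+1).choose (j+1) : ℝ) *
          (∏ i ∈ range (n + 1 - (j+1)), (r + i * q)) * (∏ i ∈ range (j+1), (x - i * q)) =
        (-1:ℝ) ^ (n - j) * (n.choose j : ℝ) *
          (∏ i ∈ range (n - j), (r + i * q)) * (∏ i ∈ range (j+1), (x - i * q))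
        + (-1:ℝ) ^ (n - j) * (n.choose (j+1) : ℝ) *
          (∏ i ∈ range (n - j), (r + i * q)) * (∏ i ∈ range (j+1), (x - i * q)) := by
      intro j hj
      rw [Nat.succ_sub_succ, Nat.choose_succ_succ, Nat.cast_add]
      ring
    rw [sum_congr rfl h2, sum_add_distrib]
    -- now goal: S1 - S2 = S1 + (C + f0)
    have h3 : ∑ j ∈ range (n + 1),
        (-1:ℝ) ^ (n - j) * (n.choose j : ℝ) *
          (∏ i ∈ range (n - j + 1), (r + i * q)) * (∏ i ∈ range j, (x - i * q))
        = -((∑ j ∈ range (n + 1),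
            (-1:ℝ) ^ (n - j) * (n.choose (j+1) : ℝ) *
              (∏ i ∈ range (n - j), (r + i * q)) * (∏ i ∈ range (j+1), (x - i * q)))
          + (-1:ℝ) ^ (n + 1 - 0) * ((n+1).choose 0 : ℝ) *
            (∏ i ∈ range (n + 1 - 0), (r + i * q)) * (∏ i ∈ range 0, (x - i * q))) := by
      rw [sum_range_succ']
      rw [sum_range_succ (fun j => (-1:ℝ) ^ (n - j) * (n.choose (j+1) : ℝ) *
              (∏ i ∈ range (n - j), (r + i * q)) * (∏ i ∈ range (j+1), (x - i * q))) n]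
      have hterm : ∀ j ∈ range n,
          (-1:ℝ) ^ (n - (j+1)) * (n.choose (j+1) : ℝ) *
            (∏ i ∈ range (n - (j+1) + 1), (r + i * q)) * (∏ i ∈ range (j+1), (x - i * q))
          = -((-1:ℝ) ^ (n - j) * (n.choose (j+1) : ℝ) *
            (∏ i ∈ range (n - j), (r + i * q)) * (∏ i ∈ range (j+1), (x - i * q))) := by
        intro j hj
        rw [mem_range] at hj
        have h4 : n - (j+1) + 1 = n - j := by omega
        have hp : (-1:ℝ) ^ (n - j) = -(-1:ℝ) ^ (n - (j+1)) := by
          have h5 : n - j = (n - (j+1)) + 1 := by omega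
          rw [h5, pow_succ]; ring
        rw [h4, hp]; ring
      rw [sum_congr rfl hterm, sum_neg_distrib]
      simp only [Nat.choose_succ_self, Nat.cast_zero, Nat.sub_zero, Nat.choose_zero_right,
        Nat.cast_one, prod_range_zero, mul_one, one_mul, mul_zero, zero_mul, add_zero,
        pow_succ]
      ring
    rw [h3]
    ring

/-- `c_n^q(r) = ∑_{j=0}^n (-1)^{n-j} C(n,j) [r|q]_{n-j} c_j^q`. -/
theorem stmt_6 (n : ℕ) (q r : ℝ) (hq : q ≠ 0) :
    (∫ x in (0:ℝ)..1, ∏ j ∈ range n, (x - r - j * q)) =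
      ∑ j ∈ range (n + 1), (-1) ^ (n - j) * (n.choose j : ℝ) *
        (∏ i ∈ range (n - j), (r + i * q)) *
        ∫ x in (0:ℝ)..1, ∏ i ∈ range j, (x - i * q) := by
  have hint : ∀ j ∈ range (n + 1),
      IntervalIntegrable (fun x => (-1:ℝ) ^ (n - j) * (n.choose j : ℝ) *
        (∏ i ∈ range (n - j), (r + i * q)) * ∏ i ∈ range j, (x - i * q))
        MeasureTheory.volume 0 1 := by
    intro j _
    apply Continuous.intervalIntegrable
    fun_prop
  simp_rw [← intervalIntegral.integral_const_mul]
  rw [← intervalIntegral.integral_finset_sum hint]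
  apply intervalIntegral.integral_congr
  intro x _
  exact key q r n x
end

section
/- For all nonnegative integers n and real q ≠ 0: ĉ_n^q = ∑_{k=0}^n q^{n-k} s(n,k) · (-1)^k/(k+1), where s(n,k) are the (signed) Stirling numbers of the first kind and ĉ_n^q = ∫_0^1 (-x|q)_n dx. -/
open Finset

/-- `ĉ_n^q = ∑_{k=0}^n q^{n-k} s(n,k) (-1)^k/(k+1)`. -/
theorem stmt_13 (n : ℕ) (q : ℝ) (hq : q ≠ 0) (s : ℕ → ℕ → ℝ)
    (hs : ∀ m : ℕ, ∀ x : ℝ,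
      ∏ i ∈ range m, (x - i) = ∑ k ∈ range (m + 1), s m k * x ^ k) :
    (∫ x in (0:ℝ)..1, ∏ j ∈ range n, (-x - j * q)) =
      ∑ k ∈ range (n + 1), q ^ (n - k) * s n k * ((-1) ^ k / (k + 1)) := by
  have key : ∀ x : ℝ, ∏ j ∈ range n, (-x - j * q)
      = ∑ k ∈ range (n + 1), q ^ (n - k) * s n k * ((-1) ^ k * x ^ k) := by
    intro x
    have h1 := hs n (-x / q)
    have h2 : ∏ j ∈ range n, (-x - j * q) = q ^ n * ∏ j ∈ range n, (-x / q - j) := by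
      rw [Finset.prod_congr rfl fun (j : ℕ) _ => show -x - j * q = q * (-x / q - j) by
          field_simp,
        Finset.prod_mul_distrib, Finset.prod_const, card_range]
    rw [h2, h1, Finset.mul_sum]
    refine Finset.sum_congr rfl fun k hk => ?_
    have hk' : k ≤ n := Nat.lt_succ_iff.mp (mem_range.mp hk)
    have hqn : q ^ (n - k) * q ^ k = q ^ n := by
      rw [← pow_add, Nat.sub_add_cancel hk']
    have hqk : (q : ℝ) ^ k ≠ 0 := pow_ne_zero _ hq
    field_simp
    rw [← hqn, neg_pow]
    rw [div_pow]
    field_simp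
  simp only [key]
  rw [intervalIntegral.integral_finset_sum]
  · refine Finset.sum_congr rfl fun k hk => ?_
    rw [intervalIntegral.integral_const_mul, intervalIntegral.integral_const_mul,
      integral_pow]
    norm_num [div_eq_mul_inv]
  · intro k hk
    exact (((intervalIntegral.intervalIntegrable_pow k).const_mul _).const_mul _)
end

section
/- For all nonnegative integers n and real numbers q ≠ 0, r: c_n^q(r) = ∑_{i=0}^n ∑_{k=0}^i C(n,i) (-1)^{n-i} q^{i-k} [r|q]_{n-i} s(i,k) · 1/(k+1), where s(i,k) are the signed Stirling numbers of the first kind. -/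
open Finset

private lemma keyA (q r : ℝ) : ∀ (n : ℕ) (x : ℝ),
    ∏ j ∈ range n, (x - r - j * q) =
      ∑ i ∈ range (n + 1), (n.choose i : ℝ) *
        (∏ j ∈ range (n - i), (-r - j * q)) * (∏ j ∈ range i, (x - j * q)) := by
  intro n
  induction n with
  | zero => intro x; simp
  | succ n ih =>
    intro x
    rw [Finset.prod_range_succ, ih, Finset.sum_mul]
    have hsplit : ∀ i ∈ range (n + 1),
        (n.choose i : ℝ) * (∏ j ∈ range (n - i), (-r - j * q)) *
            (∏ j ∈ range i, (x - j * q)) * (x - r - n * q)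
          = (n.choose i : ℝ) * (∏ j ∈ range (n - i), (-r - j * q)) *
              (∏ j ∈ range (i + 1), (x - j * q))
            + (n.choose i : ℝ) * (∏ j ∈ range (n - i + 1), (-r - j * q)) *
              (∏ j ∈ range i, (x - j * q)) := by
      intro i hi
      rw [Finset.mem_range] at hi
      have hi' : i ≤ n := Nat.lt_succ_iff.mp hi
      have hc : ((n - i : ℕ) : ℝ) = (n : ℝ) - i := by
        rw [Nat.cast_sub hi']
      rw [Finset.prod_range_succ, Finset.prod_range_succ, hc]
      ring
    rw [Finset.sum_congr rfl hsplit, Finset.sum_add_distrib]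
    rw [Finset.sum_range_succ' (fun i => ((n + 1).choose i : ℝ) *
        (∏ j ∈ range (n + 1 - i), (-r - j * q)) * (∏ j ∈ range i, (x - j * q))) (n + 1)]
    have h2 : ∀ i ∈ range (n + 1),
        ((n + 1).choose (i + 1) : ℝ) * (∏ j ∈ range (n + 1 - (i + 1)), (-r - j * q)) *
            (∏ j ∈ range (i + 1), (x - j * q))
          = (n.choose i : ℝ) * (∏ j ∈ range (n - i), (-r - j * q)) *
              (∏ j ∈ range (i + 1), (x - j * q))
            + (n.choose (i + 1) : ℝ) * (∏ j ∈ range (n - i), (-r - j * q)) *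
              (∏ j ∈ range (i + 1), (x - j * q)) := by
      intro i hi
      have : (n + 1).choose (i + 1) = n.choose i + n.choose (i + 1) := Nat.choose_succ_succ n i
      rw [this, Nat.succ_sub_succ]
      push_cast
      ring
    rw [Finset.sum_congr rfl h2, Finset.sum_add_distrib]
    have hS2 : ∑ i ∈ range (n + 1), (n.choose i : ℝ) *
          (∏ j ∈ range (n - i + 1), (-r - j * q)) * (∏ j ∈ range i, (x - j * q))
        = (∑ i ∈ range (n + 1), (n.choose (i + 1) : ℝ) *
            (∏ j ∈ range (n - i), (-r - j * q)) * (∏ j ∈ range (i + 1), (x - j * q)))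
          + ((n + 1).choose 0 : ℝ) * (∏ j ∈ range (n + 1 - 0), (-r - j * q)) *
            (∏ j ∈ range 0, (x - j * q)) := by
      rw [Finset.sum_range_succ' (fun i => (n.choose i : ℝ) *
          (∏ j ∈ range (n - i + 1), (-r - j * q)) * (∏ j ∈ range i, (x - j * q))) n]
      rw [Finset.sum_range_succ (fun i => (n.choose (i + 1) : ℝ) *
          (∏ j ∈ range (n - i), (-r - j * q)) * (∏ j ∈ range (i + 1), (x - j * q))) n]
      have hz : (n.choose (n + 1) : ℝ) = 0 := by
        rw [Nat.choose_succ_self]; norm_num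
      simp only [hz, zero_mul]
      have h3 : ∀ i ∈ range n,
          (n.choose (i + 1) : ℝ) * (∏ j ∈ range (n - (i + 1) + 1), (-r - j * q)) *
              (∏ j ∈ range (i + 1), (x - j * q))
            = (n.choose (i + 1) : ℝ) * (∏ j ∈ range (n - i), (-r - j * q)) *
              (∏ j ∈ range (i + 1), (x - j * q)) := by
        intro i hi
        rw [Finset.mem_range] at hi
        have he : n - (i + 1) + 1 = n - i := by omega
        rw [he]
      rw [Finset.sum_congr rfl h3]
      simp
    rw [hS2]
    ring

/-- `c_n^q(r) = ∑_{i=0}^n ∑_{k=0}^i C(n,i)(-1)^{n-i} q^{i-k} [r|q]_{n-i} s(i,k)/(k+1)`. -/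
theorem stmt_15 (n : ℕ) (q r : ℝ) (hq : q ≠ 0) (s : ℕ → ℕ → ℝ)
    (hs : ∀ m : ℕ, ∀ x : ℝ,
      ∏ i ∈ range m, (x - i) = ∑ l ∈ range (m + 1), s m l * x ^ l) :
    (∫ x in (0:ℝ)..1, ∏ j ∈ range n, (x - r - j * q)) =
      ∑ i ∈ range (n + 1), ∑ k ∈ range (i + 1),
        (n.choose i : ℝ) * (-1) ^ (n - i) * q ^ (i - k) *
          (∏ j ∈ range (n - i), (r + j * q)) * s i k * (1 / (k + 1)) := by
  -- Lemma B
  have lemB : ∀ (i : ℕ) (x : ℝ), ∏ j ∈ range i, (x - j * q)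
      = ∑ k ∈ range (i + 1), s i k * q ^ (i - k) * x ^ k := by
    intro i x
    have h1 : ∏ j ∈ range i, (x - j * q) = q ^ i * ∏ j ∈ range i, (x / q - j) := by
      have h0 : ∏ j ∈ range i, (x - j * q) = ∏ j ∈ range i, q * (x / q - j) := by
        refine Finset.prod_congr rfl fun j _ => ?_
        field_simp
      rw [h0, Finset.prod_mul_distrib, Finset.prod_const, Finset.card_range]
    rw [h1, hs i (x / q), Finset.mul_sum]
    refine Finset.sum_congr rfl fun k hk => ?_
    rw [Finset.mem_range] at hk
    have hk' : k ≤ i := Nat.lt_succ_iff.mp hk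
    rw [pow_sub₀ q hq hk', div_pow]
    field_simp
  -- sign conversion
  have hsign : ∀ m : ℕ, (∏ j ∈ range m, (-r - (j : ℝ) * q))
      = (-1) ^ m * ∏ j ∈ range m, (r + j * q) := by
    intro m
    have h0 : ∏ j ∈ range m, (-r - (j : ℝ) * q) = ∏ j ∈ range m, (-1 : ℝ) * (r + j * q) := by
      refine Finset.prod_congr rfl fun j _ => ?_
      ring
    rw [h0, Finset.prod_mul_distrib, Finset.prod_const, Finset.card_range]
  have hint : ∀ x : ℝ, ∏ j ∈ range n, (x - r - j * q)
      = ∑ i ∈ range (n + 1), ∑ k ∈ range (i + 1),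
          ((n.choose i : ℝ) * (-1) ^ (n - i) * q ^ (i - k) *
            (∏ j ∈ range (n - i), (r + j * q)) * s i k) * x ^ k := by
    intro x
    rw [keyA q r n x]
    refine Finset.sum_congr rfl fun i _ => ?_
    rw [hsign, lemB, Finset.mul_sum]
    refine Finset.sum_congr rfl fun k _ => ?_
    ring
  simp only [hint]
  rw [intervalIntegral.integral_finset_sum]
  · refine Finset.sum_congr rfl fun i _ => ?_
    rw [intervalIntegral.integral_finset_sum]
    · refine Finset.sum_congr rfl fun k _ => ?_
      rw [intervalIntegral.integral_const_mul, integral_pow]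
      norm_num
    · intro k _
      exact (Continuous.intervalIntegrable (by continuity) _ _)
  · intro i _
    exact (Continuous.intervalIntegrable (by continuity) _ _)
end

section
/- For all nonnegative integers n, k with k ≤ n and real numbers q ≠ 0, r, s: w_{q,r+s}(n,k) = ∑_{j=k}^n (-1)^{n-j} C(n,j) [r|q]_{n-j} w_{q,s}(j,k), where [r|q]_m = ∏_{i=0}^{m-1}(r + iq). -/
open Finset


lemma key16 (q r s : ℝ) (n : ℕ) (x : ℝ) :
    ∏ j ∈ range n, (x - (r + s) - j * q) =
    ∑ j ∈ range (n + 1), ((-1:ℝ) ^ (n - j) * (n.choose j) *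
      ∏ i ∈ range (n - j), (r + i * q)) * ∏ i ∈ range j, (x - s - i * q) := by
  induction n with
  | zero => simp
  | succ n ih =>
    rw [prod_range_succ, ih, Finset.sum_mul]
    have hsplit : ∀ j ∈ range (n+1),
        (((-1:ℝ)^(n-j) * (n.choose j) * ∏ i ∈ range (n-j), (r + i*q)) *
            ∏ i ∈ range j, (x - s - i*q)) * (x - (r+s) - n*q)
        = ((-1:ℝ)^(n-j) * (n.choose j) * ∏ i ∈ range (n-j), (r + i*q)) *
            ∏ i ∈ range (j+1), (x - s - i*q)
          + (((-1:ℝ)^(n-j) * (n.choose j) * ∏ i ∈ range (n-j), (r + i*q)) *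
              ((j:ℝ)*q - r - n*q)) * ∏ i ∈ range j, (x - s - i*q) := by
      intro j hj
      rw [prod_range_succ]
      ring
    rw [Finset.sum_congr rfl hsplit, Finset.sum_add_distrib]
    rw [Finset.sum_range_succ' (fun j => ((-1:ℝ) ^ (n + 1 - j) * ((n+1).choose j) *
      ∏ i ∈ range (n + 1 - j), (r + i * q)) * ∏ i ∈ range j, (x - s - i * q)) (n+1)]
    rw [Finset.sum_range_succ' (fun j => (((-1:ℝ)^(n-j) * (n.choose j) *
      ∏ i ∈ range (n-j), (r + i*q)) * ((j:ℝ)*q - r - n*q)) * ∏ i ∈ range j, (x - s - i*q)) n]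
    have hext : (∑ j ∈ range n, (((-1:ℝ)^(n-(j+1)) * (n.choose (j+1)) *
          ∏ i ∈ range (n-(j+1)), (r + i*q)) * (((j+1:ℕ):ℝ)*q - r - n*q)) *
          ∏ i ∈ range (j+1), (x - s - i*q))
        = ∑ j ∈ range (n+1), (((-1:ℝ)^(n-(j+1)) * (n.choose (j+1)) *
          ∏ i ∈ range (n-(j+1)), (r + i*q)) * (((j+1:ℕ):ℝ)*q - r - n*q)) *
          ∏ i ∈ range (j+1), (x - s - i*q) := by
      rw [Finset.sum_range_succ, Nat.choose_succ_self]
      simp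
    rw [hext, ← add_assoc, ← Finset.sum_add_distrib]
    have hmain : ∀ j ∈ range (n+1),
        ((-1:ℝ)^(n-j) * (n.choose j) * ∏ i ∈ range (n-j), (r + i*q)) *
            ∏ i ∈ range (j+1), (x - s - i*q)
        + (((-1:ℝ)^(n-(j+1)) * (n.choose (j+1)) *
            ∏ i ∈ range (n-(j+1)), (r + i*q)) * (((j+1:ℕ):ℝ)*q - r - n*q)) *
            ∏ i ∈ range (j+1), (x - s - i*q)
        = ((-1:ℝ) ^ (n + 1 - (j+1)) * ((n+1).choose (j+1)) *
            ∏ i ∈ range (n + 1 - (j+1)), (r + i * q)) * ∏ i ∈ range (j+1), (x - s - i * q) := by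
      intro j hj
      rw [mem_range, Nat.lt_succ_iff] at hj
      rw [Nat.succ_sub_succ, Nat.choose_succ_succ]
      rcases eq_or_lt_of_le hj with h | h
      · subst h
        simp [Nat.choose_succ_self]
      · -- j < n
        have h1 : n - j = (n - (j+1)) + 1 := by omega
        rw [h1, prod_range_succ, pow_succ]
        have h2 : ((n - (j+1) : ℕ) : ℝ) = (n:ℝ) - (j:ℝ) - 1 := by
          rw [Nat.cast_sub (by omega)]
          push_cast; ring
        push_cast
        rw [h2]
        ring
    rw [Finset.sum_congr rfl hmain]
    congr 1
    simp only [Nat.sub_zero, Nat.choose_zero_right, Nat.cast_one, Nat.cast_zero]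
    rw [prod_range_succ, pow_succ]
    simp only [range_zero, prod_empty, mul_one]
    ring

/-- `w_{q,r+s}(n,k) = ∑_{j=k}^n (-1)^{n-j} C(n,j) [r|q]_{n-j} w_{q,s}(j,k)`. -/
theorem stmt_16 (n k : ℕ) (hkn : k ≤ n) (q r s : ℝ) (hq : q ≠ 0)
    (wrs ws : ℕ → ℕ → ℝ)
    (hwrs : ∀ m : ℕ, ∀ x : ℝ,
      ∏ j ∈ range m, (x - (r + s) - j * q) = ∑ l ∈ range (m + 1), wrs m l * x ^ l)
    (hws : ∀ m : ℕ, ∀ x : ℝ,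
      ∏ j ∈ range m, (x - s - j * q) = ∑ l ∈ range (m + 1), ws m l * x ^ l) :
    wrs n k = ∑ j ∈ Icc k n, (-1) ^ (n - j) * (n.choose j : ℝ) *
      (∏ i ∈ range (n - j), (r + i * q)) * ws j k := by
  open Polynomial in
  set c : ℕ → ℝ := fun j => (-1:ℝ) ^ (n - j) * (n.choose j) * ∏ i ∈ range (n - j), (r + i * q)
    with hc
  set A : ℝ[X] := ∑ l ∈ range (n + 1), C (wrs n l) * X ^ l with hA
  set B : ℝ[X] := ∑ j ∈ range (n + 1), C (c j) * ∑ l ∈ range (j + 1), C (ws j l) * X ^ l with hB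
  have hAB : A = B := by
    apply Polynomial.funext
    intro x
    have e1 : A.eval x = ∑ l ∈ range (n + 1), wrs n l * x ^ l := by
      simp [hA, Polynomial.eval_finset_sum]
    have e2 : B.eval x = ∑ j ∈ range (n + 1), c j * ∑ l ∈ range (j + 1), ws j l * x ^ l := by
      simp [hB, Polynomial.eval_finset_sum]
    rw [e1, e2, ← hwrs n x, key16 q r s n x]
    exact Finset.sum_congr rfl fun j _ => by rw [hws j x]
  have hAk : A.coeff k = wrs n k := by
    rw [hA, Polynomial.finset_sum_coeff]
    rw [Finset.sum_eq_single k]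
    · simp
    · intro l _ hl
      simp [Polynomial.coeff_C_mul, Polynomial.coeff_X_pow, Ne.symm hl]
    · intro h
      exact absurd (mem_range.2 (Nat.lt_succ_of_le hkn)) h
  have hBj : ∀ j, (∑ l ∈ range (j + 1), C (ws j l) * X ^ l).coeff k
      = if k ≤ j then ws j k else 0 := by
    intro j
    rw [Polynomial.finset_sum_coeff]
    by_cases h : k ≤ j
    · rw [if_pos h, Finset.sum_eq_single k]
      · simp
      · intro l _ hl
        simp [Polynomial.coeff_C_mul, Polynomial.coeff_X_pow, Ne.symm hl]
      · intro hh
        exact absurd (mem_range.2 (Nat.lt_succ_of_le h)) hh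
    · rw [if_neg h]
      apply Finset.sum_eq_zero
      intro l hl
      rw [mem_range, Nat.lt_succ_iff] at hl
      have : k ≠ l := by omega
      simp [Polynomial.coeff_C_mul, Polynomial.coeff_X_pow, this]
  have hBk : B.coeff k = ∑ j ∈ Icc k n, c j * ws j k := by
    rw [hB, Polynomial.finset_sum_coeff]
    have : ∀ j ∈ range (n+1), (C (c j) * ∑ l ∈ range (j + 1), C (ws j l) * X ^ l).coeff k
        = if k ≤ j then c j * ws j k else 0 := by
      intro j _
      rw [Polynomial.coeff_C_mul, hBj j]
      split <;> simp
    rw [Finset.sum_congr rfl this, ← Finset.sum_filter]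
    congr 1
    ext j
    simp only [mem_filter, mem_range, Nat.lt_succ_iff, mem_Icc]
    omega
  rw [← hAk, hAB, hBk]
end

section
/- For every nonnegative integer n and nonnegative integer r: ĉ_n(-r) = ∑_{k=0}^n (-1)^k s_r(n+r, k+r) · 1/(k+1), where s_r are the signed r-Stirling numbers of the first kind and ĉ_n(z) = ∫_0^1 (-x + z)_n dx. -/
open Finset

/-- `ĉ_n(-r) = ∑_{k=0}^n (-1)^k s_r(n+r,k+r)/(k+1)`. -/
theorem stmt_18 (n r : ℕ) (sr : ℕ → ℕ → ℝ)
    (hsr : ∀ m : ℕ, ∀ x : ℝ,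
      ∏ j ∈ range m, (x - r - j) = ∑ k ∈ range (m + 1), sr (m + r) (k + r) * x ^ k) :
    (∫ x in (0:ℝ)..1, ∏ j ∈ range n, (-x + (-(r : ℝ)) - j)) =
      ∑ k ∈ range (n + 1), (-1) ^ k * sr (n + r) (k + r) * (1 / (k + 1)) := by
  have h : ∀ x : ℝ, (∏ j ∈ range n, (-x + (-(r : ℝ)) - j))
      = ∑ k ∈ range (n + 1), sr (n + r) (k + r) * (-x) ^ k := by
    intro x
    rw [← hsr n (-x)]
    exact Finset.prod_congr rfl fun j _ => by ring
  calc (∫ x in (0:ℝ)..1, ∏ j ∈ range n, (-x + (-(r : ℝ)) - j))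
      = ∫ x in (0:ℝ)..1, ∑ k ∈ range (n + 1), sr (n + r) (k + r) * (-x) ^ k := by
        simp_rw [h]
    _ = ∑ k ∈ range (n + 1), ∫ x in (0:ℝ)..1, sr (n + r) (k + r) * (-x) ^ k := by
        apply intervalIntegral.integral_finset_sum
        intro k _
        apply IntervalIntegrable.const_mul
        exact ((continuous_neg.pow k).intervalIntegrable 0 1)
    _ = ∑ k ∈ range (n + 1), (-1) ^ k * sr (n + r) (k + r) * (1 / (k + 1)) := by
        refine Finset.sum_congr rfl fun k _ => ?_
        have : ∀ x : ℝ, sr (n + r) (k + r) * (-x) ^ k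
            = ((-1) ^ k * sr (n + r) (k + r)) * x ^ k := fun x => by
          rw [neg_pow]; ring
        simp_rw [this]
        rw [intervalIntegral.integral_const_mul, integral_pow]
        ring
end
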